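/- arXiv:1905.07126 — 2 statements merged into one kernel-verified Lean document; each statement's English description precedes it below -/
import Mathlib

section
/- Let h ≥ 1 and let ν : {1,…,h} → {0,1}. For the admissible arrowed binary sequence attached to ν and indices i, j ∈ {1,…,h} with b(i) ≠ b(j), one has b(i) < b(j) if and only if i < j. -/
/-!
The truncations of the expansion satisfy `bₙ₊₁(i) = (ν(π⁻¹ i) + bₙ(π⁻¹ i)) / 2` and
`0 ≤ bₙ ≤ 1`. Since `π` sends the zeros of `ν` onto `{1,…,d}` and the ones onto `{d+1,…,h}`,
increasingly within each class, `π⁻¹` is monotone from `{1,…,h}` to the pairs `(ν l, l)` ordered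
lexicographically: either the first digits of `b(i)` and `b(j)` are `0` and `1`, or they agree and
`π⁻¹ i ≤ π⁻¹ j`. Induction on `n` then shows that every `bₙ`, hence `b` itself, is monotone on
`{1,…,h}`, and a monotone function orders any two points it separates as they are ordered.
-/

open scoped Classical
noncomputable section

/-- `d = #{i ∈ {1,…,h} : ν(i) = 0}`. -/
def dzero (h : ℕ) (ν : ℕ → ℕ) : ℕ :=
  ((Finset.Icc 1 h).filter (fun i => ν i = 0)).card

/-- The bijection `π` of `{1,…,h}` attached to `ν`:
`π(i) = #{l ≤ i : ν(l) = 0}` if `ν(i) = 0`, and `π(i) = d + #{l ≤ i : ν(l) = 1}` otherwise. -/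
def piOf (h : ℕ) (ν : ℕ → ℕ) (i : ℕ) : ℕ :=
  if ν i = 0 then ((Finset.Icc 1 i).filter (fun l => ν l = 0)).card
  else dzero h ν + ((Finset.Icc 1 i).filter (fun l => ν l = 1)).card

/-- The inverse of `π` on `{1,…,h}` (chosen by the unique preimage when it exists). -/
noncomputable def piInv (h : ℕ) (ν : ℕ → ℕ) (i : ℕ) : ℕ :=
  if hex : ∃ l, 1 ≤ l ∧ l ≤ h ∧ piOf h ν l = i then hex.choose else 0

/-- The binary expansion `b(i) = ∑_{k ≥ 1} ν(π^{-k}(i)) · 2^{-k}`. -/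
noncomputable def bOf (h : ℕ) (ν : ℕ → ℕ) (i : ℕ) : ℝ :=
  ∑' k : ℕ, (ν ((piInv h ν)^[k + 1] i) : ℝ) / 2 ^ (k + 1)

open Set

section BinaryExpansion

variable {α : Type*} {s : Set α} {σ : α → α} {ν : α → ℕ}

def binaryPartialSum (σ : α → α) (ν : α → ℕ) (n : ℕ) (x : α) : ℝ :=
  ∑ k ∈ Finset.range n, (ν (σ^[k + 1] x) : ℝ) / 2 ^ (k + 1)

lemma binaryPartialSum_succ (n : ℕ) (x : α) :
    binaryPartialSum σ ν (n + 1) x = (ν (σ x) + binaryPartialSum σ ν n (σ x)) / 2 := by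
  simp only [binaryPartialSum, Finset.sum_range_succ', Function.iterate_succ_apply]
  rw [add_div, Finset.sum_div, add_comm]
  congr 1
  · simp
  · refine Finset.sum_congr rfl fun k _ => ?_
    rw [pow_succ, div_div]

lemma binaryPartialSum_nonneg (n : ℕ) (x : α) : 0 ≤ binaryPartialSum σ ν n x :=
  Finset.sum_nonneg fun _ _ => by positivity

lemma binaryPartialSum_le_one (hσ : MapsTo σ s s) (hν : ∀ x ∈ s, ν x ≤ 1) (n : ℕ) :
    ∀ x ∈ s, binaryPartialSum σ ν n x ≤ 1 := by
  induction n with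
  | zero => simp [binaryPartialSum]
  | succ n ih =>
    intro x hx
    have hbit : (ν (σ x) : ℝ) ≤ 1 := by exact_mod_cast hν _ (hσ hx)
    have htail := ih _ (hσ hx)
    rw [binaryPartialSum_succ]
    linarith

lemma monotoneOn_binaryPartialSum [Preorder α] (hσ : MapsTo σ s s) (hν : ∀ x ∈ s, ν x ≤ 1)
    (hlex : MonotoneOn (fun x => toLex (ν (σ x), σ x)) s) (n : ℕ) :
    MonotoneOn (binaryPartialSum σ ν n) s := by
  induction n with
  | zero => intro x _ y _ _; simp [binaryPartialSum]
  | succ n ih =>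
    intro x hx y hy hxy
    rw [binaryPartialSum_succ, binaryPartialSum_succ]
    rcases Prod.Lex.toLex_le_toLex.mp (hlex hx hy hxy) with hbit | ⟨hbit, hle⟩
    · have hbit' : (ν (σ x) : ℝ) + 1 ≤ ν (σ y) := by exact_mod_cast hbit
      have := binaryPartialSum_le_one hσ hν n _ (hσ hx)
      have := binaryPartialSum_nonneg (σ := σ) (ν := ν) n (σ y)
      linarith
    · have := ih (hσ hx) (hσ hy) hle
      rw [show ν (σ x) = ν (σ y) from hbit]
      linarith

lemma summable_binary (hσ : MapsTo σ s s) (hν : ∀ x ∈ s, ν x ≤ 1) {x : α} (hx : x ∈ s) :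
    Summable fun k : ℕ => (ν (σ^[k + 1] x) : ℝ) / 2 ^ (k + 1) := by
  refine summable_geometric_two.of_nonneg_of_le (fun k => by positivity) fun k => ?_
  have hbit : (ν (σ^[k + 1] x) : ℝ) ≤ 1 := by exact_mod_cast hν _ (hσ.iterate _ hx)
  calc (ν (σ^[k + 1] x) : ℝ) / 2 ^ (k + 1) ≤ 1 / 2 ^ k := by
        gcongr
        · norm_num
        · omega
    _ = (1 / 2) ^ k := (one_div_pow 2 k).symm

theorem monotoneOn_tsum_binary [Preorder α] (hσ : MapsTo σ s s) (hν : ∀ x ∈ s, ν x ≤ 1)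
    (hlex : MonotoneOn (fun x => toLex (ν (σ x), σ x)) s) :
    MonotoneOn (fun x => ∑' k : ℕ, (ν (σ^[k + 1] x) : ℝ) / 2 ^ (k + 1)) s :=
  fun _x hx _y hy hxy =>
    le_of_tendsto_of_tendsto' (summable_binary hσ hν hx).hasSum.tendsto_sum_nat
      (summable_binary hσ hν hy).hasSum.tendsto_sum_nat
      fun n => monotoneOn_binaryPartialSum hσ hν hlex n hx hy hxy

end BinaryExpansion

lemma Finset.card_filter_Icc_lt_of_lt {p : ℕ → Prop} [DecidablePred p] {a b : ℕ}
    (hab : a < b) (hb : p b) :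
    ((Finset.Icc 1 a).filter p).card < ((Finset.Icc 1 b).filter p).card := by
  refine Finset.card_lt_card ((Finset.ssubset_iff_of_subset
    (Finset.filter_subset_filter _ (Finset.Icc_subset_Icc_right hab.le))).mpr ⟨b, ?_, ?_⟩)
  · simp only [Finset.mem_filter, Finset.mem_Icc]
    exact ⟨⟨by omega, le_rfl⟩, hb⟩
  · simp only [Finset.mem_filter, Finset.mem_Icc]
    omega

section ArrowedSequence

variable {h : ℕ} {ν : ℕ → ℕ}

lemma dzero_add_card_filter_eq_one (hν : ∀ i, 1 ≤ i → i ≤ h → ν i = 0 ∨ ν i = 1) :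
    dzero h ν + ((Finset.Icc 1 h).filter (fun l => ν l = 1)).card = h := by
  have hone : (Finset.Icc 1 h).filter (fun l => ν l = 1) =
      (Finset.Icc 1 h).filter (fun l => ¬ ν l = 0) := by
    refine Finset.filter_congr fun l hl => ?_
    rw [Finset.mem_Icc] at hl
    rcases hν l hl.1 hl.2 with h0 | h1 <;> simp [*]
  rw [dzero, hone, Finset.card_filter_add_card_filter_not, Nat.card_Icc, Nat.add_sub_cancel]

lemma piOf_le_dzero {l : ℕ} (hl : l ≤ h) (h0 : ν l = 0) : piOf h ν l ≤ dzero h ν := by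
  rw [piOf, if_pos h0]
  exact Finset.card_le_card (Finset.filter_subset_filter _ (Finset.Icc_subset_Icc_right hl))

lemma dzero_lt_piOf {l : ℕ} (hl : 1 ≤ l) (h1 : ν l = 1) : dzero h ν < piOf h ν l := by
  rw [piOf, if_neg (by omega)]
  have := Finset.card_filter_Icc_lt_of_lt (p := fun l => ν l = 1) hl h1
  omega

lemma piOf_mem_Icc (hν : ∀ i, 1 ≤ i → i ≤ h → ν i = 0 ∨ ν i = 1) {l : ℕ}
    (hl : l ∈ Icc 1 h) : piOf h ν l ∈ Icc 1 h := by
  rcases hν l hl.1 hl.2 with h0 | h1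
  · have hd : dzero h ν ≤ h := (Finset.card_filter_le _ _).trans (by simp)
    refine ⟨?_, (piOf_le_dzero hl.2 h0).trans hd⟩
    rw [piOf, if_pos h0]
    exact Finset.card_pos.mpr ⟨l, by simp [hl.1, h0]⟩
  · have hsum := dzero_add_card_filter_eq_one hν
    have hcard := Finset.card_le_card (Finset.filter_subset_filter (fun l => ν l = 1)
      (Finset.Icc_subset_Icc_right (a := 1) hl.2))
    have hd := dzero_lt_piOf (h := h) hl.1 h1
    refine ⟨by omega, ?_⟩
    rw [piOf, if_neg (by omega)]
    omega

lemma piOf_lt_piOf (hν : ∀ i, 1 ≤ i → i ≤ h → ν i = 0 ∨ ν i = 1) {l₁ l₂ : ℕ}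
    (hl₁ : l₁ ∈ Icc 1 h) (hl₂ : l₂ ∈ Icc 1 h) (hlt : toLex (ν l₁, l₁) < toLex (ν l₂, l₂)) :
    piOf h ν l₁ < piOf h ν l₂ := by
  rcases Prod.Lex.toLex_lt_toLex.mp hlt with hbit | ⟨hbit, hl⟩
  · change ν l₁ < ν l₂ at hbit
    have := hν l₁ hl₁.1 hl₁.2
    have := hν l₂ hl₂.1 hl₂.2
    obtain ⟨h0, h1⟩ : ν l₁ = 0 ∧ ν l₂ = 1 := by omega
    exact (piOf_le_dzero hl₁.2 h0).trans_lt (dzero_lt_piOf hl₂.1 h1)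
  · change ν l₁ = ν l₂ at hbit
    change l₁ < l₂ at hl
    rcases hν l₂ hl₂.1 hl₂.2 with h0 | h1
    · rw [piOf, piOf, if_pos (hbit.trans h0), if_pos h0]
      exact Finset.card_filter_Icc_lt_of_lt hl h0
    · rw [piOf, piOf, if_neg (by omega), if_neg (by omega)]
      exact Nat.add_lt_add_left (Finset.card_filter_Icc_lt_of_lt hl h1) _

lemma piOf_injOn (hν : ∀ i, 1 ≤ i → i ≤ h → ν i = 0 ∨ ν i = 1) :
    InjOn (piOf h ν) (Icc 1 h) := by
  intro l₁ hl₁ l₂ hl₂ heq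
  rcases lt_trichotomy (toLex (ν l₁, l₁)) (toLex (ν l₂, l₂)) with hlt | hkey | hgt
  · exact absurd heq (piOf_lt_piOf hν hl₁ hl₂ hlt).ne
  · exact congrArg Prod.snd (toLex.injective hkey)
  · exact absurd heq (piOf_lt_piOf hν hl₂ hl₁ hgt).ne'

lemma piOf_bijOn (hν : ∀ i, 1 ≤ i → i ≤ h → ν i = 0 ∨ ν i = 1) :
    BijOn (piOf h ν) (Icc 1 h) (Icc 1 h) :=
  ((finite_Icc 1 h).injOn_iff_bijOn_of_mapsTo fun _ => piOf_mem_Icc hν).mp (piOf_injOn hν)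

lemma piInv_mem_Icc_and_piOf_piInv (hν : ∀ i, 1 ≤ i → i ≤ h → ν i = 0 ∨ ν i = 1) {i : ℕ}
    (hi : i ∈ Icc 1 h) : piInv h ν i ∈ Icc 1 h ∧ piOf h ν (piInv h ν i) = i := by
  obtain ⟨l, hl, rfl⟩ := (piOf_bijOn hν).surjOn hi
  have hex : ∃ l', 1 ≤ l' ∧ l' ≤ h ∧ piOf h ν l' = piOf h ν l := ⟨l, hl.1, hl.2, rfl⟩
  rw [piInv, dif_pos hex]
  obtain ⟨h1, h2, he⟩ := hex.choose_spec
  exact ⟨⟨h1, h2⟩, he⟩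

lemma monotoneOn_toLex_piInv (hν : ∀ i, 1 ≤ i → i ≤ h → ν i = 0 ∨ ν i = 1) :
    MonotoneOn (fun i => toLex (ν (piInv h ν i), piInv h ν i)) (Icc 1 h) := by
  intro i hi j hj hij
  by_contra hlt
  obtain ⟨hi', hπi⟩ := piInv_mem_Icc_and_piOf_piInv hν hi
  obtain ⟨hj', hπj⟩ := piInv_mem_Icc_and_piOf_piInv hν hj
  have := piOf_lt_piOf hν hj' hi' (not_le.mp hlt)
  omega

lemma monotoneOn_bOf (hν : ∀ i, 1 ≤ i → i ≤ h → ν i = 0 ∨ ν i = 1) :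
    MonotoneOn (bOf h ν) (Icc 1 h) :=
  monotoneOn_tsum_binary (fun _ hi => (piInv_mem_Icc_and_piOf_piInv hν hi).1)
    (fun l hl => by rcases hν l hl.1 hl.2 with h | h <;> omega) (monotoneOn_toLex_piInv hν)

end ArrowedSequence

theorem statement1_general (h : ℕ) (ν : ℕ → ℕ)
    (hν : ∀ i, 1 ≤ i → i ≤ h → ν i = 0 ∨ ν i = 1)
    (i j : ℕ) (hi1 : 1 ≤ i) (hi2 : i ≤ h) (hj1 : 1 ≤ j) (hj2 : j ≤ h)
    (hb : bOf h ν i ≠ bOf h ν j) :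
    bOf h ν i < bOf h ν j ↔ i < j := by
  have hi : i ∈ Icc 1 h := ⟨hi1, hi2⟩
  have hj : j ∈ Icc 1 h := ⟨hj1, hj2⟩
  constructor
  · intro hlt
    by_contra hji
    exact (monotoneOn_bOf hν hj hi (not_lt.mp hji)).not_gt hlt
  · intro hij
    exact (monotoneOn_bOf hν hi hj hij.le).lt_of_ne hb

/-- for the admissible arrowed binary sequence attached to `ν : {1,…,h} → {0,1}`
and `i, j ∈ {1,…,h}` with `b(i) ≠ b(j)`, one has `b(i) < b(j) ↔ i < j`. -/
theorem statement1 (h : ℕ) (hh : 1 ≤ h) (ν : ℕ → ℕ)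
    (hν : ∀ i, 1 ≤ i → i ≤ h → ν i = 0 ∨ ν i = 1)
    (i j : ℕ) (hi1 : 1 ≤ i) (hi2 : i ≤ h) (hj1 : 1 ≤ j) (hj2 : j ≤ h)
    (hb : bOf h ν i ≠ bOf h ν j) :
    bOf h ν i < bOf h ν j ↔ i < j :=
  statement1_general h ν hν i j hi1 hi2 hj1 hj2 hb
end
end

section
/- Let ξ = ((m_1,n_1),(m_2,n_2)) be a Newton polygon with two segments such that m_r ≤ n_r for r = 1,2, let ξ^C = ((m_1,n_1−m_1),(m_2,n_2−m_2)) be its curtailment, and let φ : T(ξ^C) → T(ξ) be φ(r,i) = (r,i). Write δ_S, π_S for the data of S(ξ) and δ_R, π_R for the data of S(ξ^C). Then: (a) δ_S(φ(t)) = δ_R(t) for all t ∈ T(ξ^C), and {φ(t) : t ∈ T(ξ^C), δ_R(t) = 1} = {s ∈ T(ξ) : δ_S(s) = 1}; (b) T(ξ) \ φ(T(ξ^C)) = {π_S(s) : s ∈ T(ξ), δ_S(s) = 1}; (c) for t ∈ T(ξ^C), φ(π_R(t)) = π_S(φ(t)) if δ_R(t) = 0, and φ(π_R(t)) = π_S(π_S(φ(t)))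 if δ_R(t) = 1. -/
/-! Curtailment keeps every `m_r` and shrinks `h_r = m_r + n_r` to `n_r`, so `T(ξ^C)` is `T(ξ)`
without the positions `n_r < i ≤ h_r`. On `T(ξ)` the bijection is explicit:
`π(r, i) = (r, i + n_r)` for `i ≤ m_r` and `π(r, i) = (r, i - m_r)` otherwise. Hence `π` maps the
`δ = 1` positions exactly onto the removed ones, and the curtailed `π` agrees with `π` where
`δ = 0` and with `π²` where `δ = 1`, both shifting `i ≤ m_r` to `i + n_r - m_r`. -/

open scoped Classical

noncomputable section

/-- Symbols `(r, i)` (1-indexed component `r`, 1-indexed position `i`). -/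
abbrev Symb : Type := ℕ × ℕ

/-- A Newton polygon: a finite list of coprime pairs `(m_r, n_r)` with `m_r + n_r > 0`
and weakly decreasing slopes `n_r / (m_r + n_r)`. -/
structure NewtonPolygon where
  seg : List (ℕ × ℕ)
  coprime : ∀ p ∈ seg, Nat.Coprime p.1 p.2
  pos : ∀ p ∈ seg, 0 < p.1 + p.2
  slopes : ∀ r q : Fin seg.length, r ≤ q →
    ((seg.get q).2 : ℚ) / (((seg.get q).1 : ℚ) + ((seg.get q).2 : ℚ)) ≤
      ((seg.get r).2 : ℚ) / (((seg.get r).1 : ℚ) + ((seg.get r).2 : ℚ))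

namespace NewtonPolygon

/-- The number `z` of segments. -/
def z (ξ : NewtonPolygon) : ℕ := ξ.seg.length

/-- `m_r` (1-indexed). -/
def m (ξ : NewtonPolygon) (r : ℕ) : ℕ := (ξ.seg.getD (r - 1) (0, 0)).1

/-- `n_r` (1-indexed). -/
def n (ξ : NewtonPolygon) (r : ℕ) : ℕ := (ξ.seg.getD (r - 1) (0, 0)).2

/-- `h_r = m_r + n_r`. -/
def h (ξ : NewtonPolygon) (r : ℕ) : ℕ := ξ.m r + ξ.n r

/-- Membership in the symbol set `T(ξ) = {(r,i) : 1 ≤ r ≤ z, 1 ≤ i ≤ h_r}`. -/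
def mem (ξ : NewtonPolygon) (t : Symb) : Prop :=
  1 ≤ t.1 ∧ t.1 ≤ ξ.z ∧ 1 ≤ t.2 ∧ t.2 ≤ ξ.h t.1

/-- The symbol set `T(ξ)` as a finset. -/
def Tfin (ξ : NewtonPolygon) : Finset Symb :=
  ((Finset.Icc 1 ξ.z) ×ˢ (Finset.Icc 1 (ξ.seg.foldr (fun p s => p.1 + p.2 + s) 0))).filter
    (fun t => t.2 ≤ ξ.h t.1)

/-- The map `δ : T(ξ) → {0,1}`; `δ(r,i) = 1` iff `i ≤ m_r`. -/
def dlt (ξ : NewtonPolygon) (t : Symb) : ℕ := if t.2 ≤ ξ.m t.1 then 1 else 0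

/-- The bijection `π(r, i) = (r, ((i - m_r - 1) mod h_r) + 1)`. -/
def pmap (ξ : NewtonPolygon) (t : Symb) : Symb :=
  (t.1, (((t.2 : ℤ) - (ξ.m t.1 : ℤ) - 1) % ((ξ.h t.1 : ℤ))).toNat + 1)

/-- The inverse of `π`: `π⁻¹(r, i) = (r, ((i + m_r - 1) mod h_r) + 1)`. -/
def pinv (ξ : NewtonPolygon) (t : Symb) : Symb :=
  (t.1, (((t.2 : ℤ) + (ξ.m t.1 : ℤ) - 1) % ((ξ.h t.1 : ℤ))).toNat + 1)

/-- Binary expansion `b(t) = ∑_{k ≥ 1} δ(π^{-k}(t)) · 2^{-k}`. -/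
def bexp (ξ : NewtonPolygon) (t : Symb) : ℝ :=
  ∑' k : ℕ, (ξ.dlt (ξ.pinv^[k + 1] t) : ℝ) / 2 ^ (k + 1)

/-- The linear order on `T(ξ)`: `t < t'` iff `b(t) < b(t')`, or `b(t) = b(t')` and
`t` is in an earlier component. -/
def slt (ξ : NewtonPolygon) (t t' : Symb) : Prop :=
  ξ.bexp t < ξ.bexp t' ∨ (ξ.bexp t = ξ.bexp t' ∧ t.1 < t'.1)

/-- The length `ℓ(ξ)`: the number of pairs `t < t'` with `δ(t) = 0` and `δ(t') = 1`. -/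
def len (ξ : NewtonPolygon) : ℕ :=
  ((ξ.Tfin ×ˢ ξ.Tfin).filter (fun p => ξ.slt p.1 p.2 ∧ ξ.dlt p.1 = 0 ∧ ξ.dlt p.2 = 1)).card

/-- `π' = τ ∘ π`, the permutation of the small modification by `(u, v)`. -/
def pmod (ξ : NewtonPolygon) (u v : Symb) (t : Symb) : Symb := Equiv.swap u v (ξ.pmap t)

/-- The inverse of `π'`. -/
def pmodInv (ξ : NewtonPolygon) (u v : Symb) (t : Symb) : Symb := ξ.pinv (Equiv.swap u v t)

/-- `b'(t) = ∑_{k ≥ 1} δ(π'^{-k}(t)) · 2^{-k}` of the small modification by `(u, v)`. -/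
def bmod (ξ : NewtonPolygon) (u v : Symb) (t : Symb) : ℝ :=
  ∑' k : ℕ, (ξ.dlt ((ξ.pmodInv u v)^[k + 1] t) : ℝ) / 2 ^ (k + 1)

/-- The order of the small modification by `(u, v)`: the order of `S(ξ)` with the
positions of `u` and `v` exchanged. -/
def lt0 (ξ : NewtonPolygon) (u v : Symb) (t t' : Symb) : Prop :=
  ξ.slt (Equiv.swap u v t) (Equiv.swap u v t')

/-- `R` is a specialization of `S(ξ)` by `(u, v)`: a strict linear order on `T(ξ)`
such that `t ≺ t'` implies `b'(t) ≤ b'(t')`. -/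
def IsSpec (ξ : NewtonPolygon) (u v : Symb) (R : Symb → Symb → Prop) : Prop :=
  (∀ t ∈ ξ.Tfin, ¬ R t t) ∧
  (∀ t ∈ ξ.Tfin, ∀ t' ∈ ξ.Tfin, ∀ t'' ∈ ξ.Tfin, R t t' → R t' t'' → R t t'') ∧
  (∀ t ∈ ξ.Tfin, ∀ t' ∈ ξ.Tfin, t ≠ t' → R t t' ∨ R t' t) ∧
  (∀ t ∈ ξ.Tfin, ∀ t' ∈ ξ.Tfin, R t t' → ξ.bmod u v t ≤ ξ.bmod u v t')

/-- The length `ℓ(≺)` of an order `R`: the number of pairs `t ≺ t'` in `T(ξ)` with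
`δ(t) = 0` and `δ(t') = 1`. -/
def lenR (ξ : NewtonPolygon) (R : Symb → Symb → Prop) : ℕ :=
  ((ξ.Tfin ×ˢ ξ.Tfin).filter (fun p => R p.1 p.2 ∧ ξ.dlt p.1 = 0 ∧ ξ.dlt p.2 = 1)).card

/-- There exists a generic specialization of `S(ξ)` by `(u, v)`. -/
def ExGeneric (ξ : NewtonPolygon) (u v : Symb) : Prop :=
  ∃ R : Symb → Symb → Prop, ξ.IsSpec u v R ∧ (ξ.lenR R : ℤ) = (ξ.len : ℤ) - 1

/-- `α_k = π'^k(u)`. -/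
def alpha (ξ : NewtonPolygon) (u v : Symb) (k : ℕ) : Symb := (ξ.pmod u v)^[k] u

/-- `β_k = π'^k(v)`. -/
def beta (ξ : NewtonPolygon) (u v : Symb) (k : ℕ) : Symb := (ξ.pmod u v)^[k] v

/-- The set `A_k` computed with respect to an order `R`. -/
def AsetOf (ξ : NewtonPolygon) (u v : Symb) (R : Symb → Symb → Prop) (k : ℕ) : Finset Symb :=
  ξ.Tfin.filter (fun t =>
    (if k = 0 then ξ.dlt t = 0 else t.1 ≠ v.1 ∧ ξ.dlt t = ξ.dlt (ξ.alpha u v k)) ∧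
    R t (ξ.alpha u v k) ∧ R (ξ.alpha u v (k + 1)) (ξ.pmod u v t))

/-- The maximum of a finset for an order `R`. -/
def maxOf (R : Symb → Symb → Prop) (s : Finset Symb) : Symb :=
  if hmax : ∃ t, t ∈ s ∧ ∀ t' ∈ s, t' ≠ t → R t' t then hmax.choose else (0, 0)

/-- The minimum of a finset for an order `R`. -/
def minOf (R : Symb → Symb → Prop) (s : Finset Symb) : Symb :=
  if hmin : ∃ t, t ∈ s ∧ ∀ t' ∈ s, t' ≠ t → R t t' then hmin.choose else (0, 0)

/-- The pairs `(t, t')` reversed in a step of Construction A: `t = α_k` and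
`α_k <_{k-1} t' ≤_{k-1} w` where `w = π'(t_max)`. -/
def revA (R : Symb → Symb → Prop) (a w : Symb) (t t' : Symb) : Prop :=
  t = a ∧ R t t' ∧ (R t' w ∨ t' = w)

/-- One step of Construction A. -/
def stepA (R : Symb → Symb → Prop) (a w : Symb) : Symb → Symb → Prop :=
  fun t t' => (R t t' ∧ ¬ revA R a w t t') ∨ revA R a w t' t

/-- The pairs `(t, t')` reversed in a step of Construction B: `t' = β_k` and
`w ≤_{k-1} t <_{k-1} β_k` where `w = π'(t_min)`. -/
def revB (R : Symb → Symb → Prop) (b w : Symb) (t t' : Symb) : Prop :=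
  t' = b ∧ R t t' ∧ (R w t ∨ t = w)

/-- One step of Construction B. -/
def stepB (R : Symb → Symb → Prop) (b w : Symb) : Symb → Symb → Prop :=
  fun t t' => (R t t' ∧ ¬ revB R b w t t') ∨ revB R b w t' t

/-- The order `<_k` of Construction A (for `k ≥ 1`, meaningful when `A_{k-1} ≠ ∅`). -/
def ordA (ξ : NewtonPolygon) (u v : Symb) : ℕ → Symb → Symb → Prop
  | 0 => ξ.lt0 u v
  | k + 1 =>
      stepA (ordA ξ u v k) (ξ.alpha u v (k + 1))
        (ξ.pmod u v (maxOf (ordA ξ u v k) (ξ.AsetOf u v (ordA ξ u v k) k)))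

/-- The set `A_k` of Construction A. -/
def Aset (ξ : NewtonPolygon) (u v : Symb) (k : ℕ) : Finset Symb :=
  ξ.AsetOf u v (ordA ξ u v k) k

/-- The set `B_k` computed with respect to an order `R`. -/
def BsetOf (ξ : NewtonPolygon) (u v : Symb) (R : Symb → Symb → Prop) (k : ℕ) : Finset Symb :=
  ξ.Tfin.filter (fun t =>
    (if k = 0 then ξ.dlt t = 1 else ξ.dlt t = ξ.dlt (ξ.beta u v k)) ∧
    R (ξ.beta u v k) t ∧ R (ξ.pmod u v t) (ξ.beta u v (k + 1)))

/-- The order `<_{a+k}` of Construction B (for `k ≥ 1`, meaningful when `B_{k-1} ≠ ∅`). -/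
def ordB (ξ : NewtonPolygon) (u v : Symb) (a : ℕ) : ℕ → Symb → Symb → Prop
  | 0 => ordA ξ u v a
  | k + 1 =>
      stepB (ordB ξ u v a k) (ξ.beta u v (k + 1))
        (ξ.pmod u v (minOf (ordB ξ u v a k) (ξ.BsetOf u v (ordB ξ u v a k) k)))

/-- The set `B_k` of Construction B. -/
def Bset (ξ : NewtonPolygon) (u v : Symb) (a k : ℕ) : Finset Symb :=
  ξ.BsetOf u v (ordB ξ u v a k) k

end NewtonPolygon

namespace NewtonPolygon

variable (P : NewtonPolygon) {r i : ℕ}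

lemma getD_fst_add_snd_le_foldr (l : List (ℕ × ℕ)) (k : ℕ) :
    (l.getD k (0, 0)).1 + (l.getD k (0, 0)).2 ≤ l.foldr (fun p s => p.1 + p.2 + s) 0 := by
  induction l generalizing k with
  | nil => simp
  | cons p l ih =>
    cases k with
    | zero => simp
    | succ k => simpa using (ih k).trans (Nat.le_add_left _ _)

lemma mem_Tfin {t : Symb} : t ∈ P.Tfin ↔ P.mem t := by
  have := getD_fst_add_snd_le_foldr P.seg (t.1 - 1)
  unfold Tfin mem h m n
  simp only [Finset.mem_filter, Finset.mem_product, Finset.mem_Icc]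
  omega

lemma pmap_of_le_m (hi : 1 ≤ i) (him : i ≤ P.m r) : P.pmap (r, i) = (r, i + P.n r) := by
  have hmod : ((i : ℤ) - P.m r - 1) % (P.h r : ℤ) = (i : ℤ) - P.m r - 1 + P.h r := by
    rw [← Int.add_emod_right]
    unfold h
    exact Int.emod_eq_of_lt (by omega) (by omega)
  rw [pmap, hmod]
  unfold h
  congr 1
  omega

lemma pmap_of_m_lt (hmi : P.m r < i) (hih : i ≤ P.h r) : P.pmap (r, i) = (r, i - P.m r) := by
  have hmod : ((i : ℤ) - P.m r - 1) % (P.h r : ℤ) = (i : ℤ) - P.m r - 1 :=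
    Int.emod_eq_of_lt (by omega) (by omega)
  rw [pmap, hmod]
  congr 1
  omega

lemma dlt_eq_one_iff {t : Symb} : P.dlt t = 1 ↔ t.2 ≤ P.m t.1 := by
  unfold dlt; split_ifs <;> simp_all

lemma dlt_eq_zero_iff {t : Symb} : P.dlt t = 0 ↔ P.m t.1 < t.2 := by
  unfold dlt; split_ifs <;> simp_all

def IsCurtailmentOf (ξC ξ : NewtonPolygon) : Prop :=
  (∀ p ∈ ξ.seg, p.1 ≤ p.2) ∧ ξC.seg = ξ.seg.map (fun p => (p.1, p.2 - p.1))

namespace IsCurtailmentOf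

variable {ξC ξ : NewtonPolygon} (hC : ξC.IsCurtailmentOf ξ) {r : ℕ} {t : Symb}
include hC

lemma m_le_n : ξ.m r ≤ ξ.n r := by
  unfold m n
  rcases lt_or_ge (r - 1) ξ.seg.length with hr | hr
  · rw [List.getD_eq_getElem _ _ hr]
    exact hC.1 _ (List.getElem_mem hr)
  · rw [List.getD_eq_default _ _ hr]

lemma getD_seg (k : ℕ) : ξC.seg.getD k (0, 0) =
    ((ξ.seg.getD k (0, 0)).1, (ξ.seg.getD k (0, 0)).2 - (ξ.seg.getD k (0, 0)).1) := by
  rw [hC.2]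
  exact List.getD_map _ (0, 0) _

lemma z_eq : ξC.z = ξ.z := by simp [z, hC.2]

lemma m_eq : ξC.m r = ξ.m r := by
  unfold m
  rw [hC.getD_seg]

lemma n_eq : ξC.n r = ξ.n r - ξ.m r := by
  unfold m n
  rw [hC.getD_seg]

lemma h_eq : ξC.h r = ξ.n r := by
  have := hC.m_le_n (r := r)
  rw [h, hC.m_eq, hC.n_eq]
  omega

lemma dlt_eq : ξC.dlt t = ξ.dlt t := by simp [dlt, hC.m_eq]

lemma filter_dlt_eq_one :
    ξC.Tfin.filter (fun t => ξC.dlt t = 1) = ξ.Tfin.filter (fun t => ξ.dlt t = 1) := by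
  ext t
  have := hC.m_le_n (r := t.1)
  simp only [Finset.mem_filter, mem_Tfin, mem, dlt_eq_one_iff, hC.z_eq, hC.m_eq, h]
  omega

lemma mem_sdiff_Tfin : t ∈ ξ.Tfin \ ξC.Tfin ↔ ξ.mem t ∧ ξ.n t.1 < t.2 := by
  simp only [Finset.mem_sdiff, mem_Tfin, mem, hC.z_eq, hC.h_eq]
  omega

lemma sdiff_Tfin_eq_image_pmap :
    ξ.Tfin \ ξC.Tfin = (ξ.Tfin.filter (fun s => ξ.dlt s = 1)).image ξ.pmap := by
  ext ⟨r, i⟩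
  simp only [hC.mem_sdiff_Tfin, Finset.mem_image, Finset.mem_filter, mem_Tfin, mem,
    dlt_eq_one_iff, h, Prod.exists]
  constructor
  · rintro ⟨⟨hr1, hrz, -, hih⟩, hni⟩
    refine ⟨r, i - ξ.n r, ⟨⟨hr1, hrz, by omega, by omega⟩, by omega⟩, ?_⟩
    rw [pmap_of_le_m _ (by omega) (by omega)]
    congr 1
    omega
  · rintro ⟨q, j, ⟨⟨hq1, hqz, hj1, -⟩, hjm⟩, hpmap⟩
    rw [pmap_of_le_m _ hj1 hjm, Prod.mk.injEq] at hpmap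
    obtain ⟨rfl, rfl⟩ := hpmap
    exact ⟨⟨hq1, hqz, by omega, by omega⟩, by omega⟩

lemma pmap_of_dlt_eq_zero (ht : ξC.mem t) (hd : ξC.dlt t = 0) : ξC.pmap t = ξ.pmap t := by
  obtain ⟨r, i⟩ := t
  replace hd : ξ.m r < i := by rwa [dlt_eq_zero_iff, hC.m_eq] at hd
  have hi : i ≤ ξ.n r := hC.h_eq ▸ ht.2.2.2
  rw [ξC.pmap_of_m_lt (hC.m_eq ▸ hd) (by rw [hC.h_eq]; exact hi),
    ξ.pmap_of_m_lt hd (by unfold h; omega), hC.m_eq]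

lemma pmap_of_dlt_eq_one (ht : ξC.mem t) (hd : ξC.dlt t = 1) :
    ξC.pmap t = ξ.pmap (ξ.pmap t) := by
  obtain ⟨r, i⟩ := t
  replace hd : i ≤ ξ.m r := by rwa [dlt_eq_one_iff, hC.m_eq] at hd
  have := hC.m_le_n (r := r)
  have hi : 1 ≤ i := ht.2.2.1
  rw [ξC.pmap_of_le_m hi (hC.m_eq ▸ hd), ξ.pmap_of_le_m hi hd,
    ξ.pmap_of_m_lt (by omega) (by unfold h; omega), hC.n_eq]
  congr 1
  omega

end IsCurtailmentOf

end NewtonPolygon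

/-- relation between the data of `S(ξ)` and `S(ξ^C)` under the inclusion
`φ(r,i) = (r,i)`:
(a) `δ_S ∘ φ = δ_R` and the `δ = 1` parts of `T(ξ^C)` and `T(ξ)` coincide;
(b) `T(ξ) ∖ φ(T(ξ^C)) = {π_S(s) : s ∈ T(ξ), δ_S(s) = 1}`;
(c) `φ(π_R(t)) = π_S(φ(t))` if `δ_R(t) = 0` and `φ(π_R(t)) = π_S(π_S(φ(t)))` if `δ_R(t) = 1`. -/
theorem statement5 (ξ ξC : NewtonPolygon) (m1 n1 m2 n2 : ℕ)
    (hseg : ξ.seg = [(m1, n1), (m2, n2)]) (hm1 : m1 ≤ n1) (hm2 : m2 ≤ n2)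
    (hsegC : ξC.seg = [(m1, n1 - m1), (m2, n2 - m2)]) :
    (∀ t : Symb, ξC.mem t → ξ.dlt t = ξC.dlt t) ∧
    (ξC.Tfin.filter (fun t => ξC.dlt t = 1) = ξ.Tfin.filter (fun t => ξ.dlt t = 1)) ∧
    (ξ.Tfin \ ξC.Tfin = (ξ.Tfin.filter (fun s => ξ.dlt s = 1)).image ξ.pmap) ∧
    (∀ t : Symb, ξC.mem t →
      (ξC.dlt t = 0 → ξC.pmap t = ξ.pmap t) ∧
      (ξC.dlt t = 1 → ξC.pmap t = ξ.pmap (ξ.pmap t))) := by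
  have hC : ξC.IsCurtailmentOf ξ := ⟨by simp [hseg, hm1, hm2], by simp [hseg, hsegC]⟩
  exact ⟨fun t _ => hC.dlt_eq.symm, hC.filter_dlt_eq_one, hC.sdiff_Tfin_eq_image_pmap,
    fun t ht => ⟨hC.pmap_of_dlt_eq_zero ht, hC.pmap_of_dlt_eq_one ht⟩⟩
end
end
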